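/- arXiv:1203.5718 — 6 statements merged into one kernel-verified Lean document; each statement's English description precedes it below -/
import Mathlib

section
/- Let B be a commutative noetherian ring whose Jacobson radical is zero, and let M be a finitely generated B-module. If the function assigning to each maximal ideal m of B the dimension of M/mM as a vector space over the residue field B/m is locally constant on the maximal spectrum of B (with its Zariski topology), then M is a flat B-module. -/
/-!
Fix a maximal ideal `I`, put `n = dim M/IM` and lift a basis of `M/IM` to `x : Fin n → M`.
By Nakayama some `r ∉ I` has `r • M ⊆ span x`, and local constancy gives `g ∉ I` such that
`dim M/JM = n` for all maximal `J ∌ g`. For maximal `J ∌ r g` the images of `x` then span the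
`n`-dimensional fiber `M/JM`, hence are a basis of it, so every relation among the `x i` has
coefficients in `J`. Multiplied by `r g` these coefficients lie in every maximal ideal, hence
vanish. So `Bⁿ → M` becomes an isomorphism after localizing at `I`: `M` is locally free, hence
flat.
-/
section

open Submodule

variable {B M : Type*} [CommRing B] [AddCommGroup M] [Module B M]

lemma span_range_mkQ_eq_top_of_smul_mem_span {J : Ideal B} [J.IsMaximal] {ι : Type*} {x : ι → M}
    {r : B} (hr : r ∉ J) (hrx : ∀ m : M, r • m ∈ span B (Set.range x)) :
    span (B ⧸ J) (Set.range ((J • ⊤ : Submodule B M).mkQ ∘ x)) = ⊤ := by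
  let := Ideal.Quotient.field J
  have hunit : IsUnit (Ideal.Quotient.mk J r) :=
    isUnit_iff_ne_zero.mpr (Ideal.Quotient.eq_zero_iff_mem.not.mpr hr)
  refine eq_top_iff.mpr fun q _ ↦ ?_
  obtain ⟨m, rfl⟩ := Submodule.Quotient.mk_surjective _ q
  rw [← smul_mem_iff_of_isUnit _ hunit, Module.Quotient.mk_smul_mk]
  refine span_le_restrictScalars B (B ⧸ J) _ ?_
  rw [Set.range_comp, span_image]
  exact mem_map_of_mem (hrx m)

lemma mem_of_sum_smul_eq_zero_of_finrank_eq {J : Ideal B} [J.IsMaximal] {ι : Type*} [Fintype ι]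
    {x : ι → M} {r : B} (hr : r ∉ J) (hrx : ∀ m : M, r • m ∈ span B (Set.range x))
    (hrank : Module.finrank (B ⧸ J) (M ⧸ (J • ⊤ : Submodule B M)) = Fintype.card ι)
    {v : ι → B} (hv : ∑ i, v i • x i = 0) (i : ι) : v i ∈ J := by
  have hli := linearIndependent_of_top_le_span_of_card_eq_finrank
    (span_range_mkQ_eq_top_of_smul_mem_span hr hrx).ge hrank.symm
  refine Ideal.Quotient.eq_zero_iff_mem.mp <|
    Fintype.linearIndependent_iff.mp hli (fun i ↦ Ideal.Quotient.mk J (v i)) ?_ i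
  simpa only [Function.comp_apply, mkQ_apply, Module.Quotient.mk_smul_mk, map_sum, map_zero] using
    congrArg (J • ⊤ : Submodule B M).mkQ hv

lemma exists_fin_finrank_smul_mem_span [Module.Finite B M] (J : Ideal B) [J.IsMaximal] :
    ∃ (x : Fin (Module.finrank (B ⧸ J) (M ⧸ (J • ⊤ : Submodule B M))) → M) (r : B),
      r ∉ J ∧ ∀ m : M, r • m ∈ span B (Set.range x) := by
  let := Ideal.Quotient.field J
  have := Module.Finite.of_restrictScalars_finite B (B ⧸ J) (M ⧸ (J • ⊤ : Submodule B M))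
  let b := Module.finBasis (B ⧸ J) (M ⧸ (J • ⊤ : Submodule B M))
  obtain ⟨x, hx⟩ : ∃ x, (J • ⊤ : Submodule B M).mkQ ∘ x = b :=
    ⟨_, funext fun i ↦ Function.surjInv_eq (mkQ_surjective _) (b i)⟩
  have hspan : ⊤ ≤ span B (Set.range x) ⊔ J • ⊤ := by
    rw [sup_comm, ← comap_map_mkQ, ← span_image, ← Set.range_comp, hx,
      ← restrictScalars_span B (B ⧸ J) Ideal.Quotient.mk_surjective,
      b.span_eq, restrictScalars_top, comap_top]
  obtain ⟨r, hr1, hr⟩ := exists_sub_one_mem_and_smul_le_of_fg_of_le_sup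
    Module.Finite.fg_top le_rfl hspan
  refine ⟨x, r, fun hrJ ↦ Ideal.IsMaximal.ne_top ‹_› ?_,
    fun m ↦ hr (smul_mem_pointwise_smul m r ⊤ trivial)⟩
  exact Ideal.eq_top_of_isUnit_mem J (by simpa using J.sub_mem hrJ hr1) isUnit_one

lemma MaximalSpectrum.exists_notMem_forall_eq_of_isLocallyConstant {α : Type*}
    {f : MaximalSpectrum B → α} (hf : IsLocallyConstant f) (p : MaximalSpectrum B) :
    ∃ g ∉ p.asIdeal, ∀ q : MaximalSpectrum B, g ∉ q.asIdeal → f q = f p := by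
  obtain ⟨U, hU, hUf⟩ := isOpen_induced_iff.mp (hf.isOpen_fiber (f p))
  obtain ⟨_, ⟨g, rfl⟩, hpg, hgU⟩ :=
    PrimeSpectrum.isTopologicalBasis_basic_opens.exists_subset_of_mem_open
      (show p ∈ MaximalSpectrum.toPrimeSpectrum ⁻¹' U by rw [hUf]; rfl) hU
  refine ⟨g, hpg, fun q hq ↦ ?_⟩
  change q ∈ {q | f q = f p}
  exact hUf ▸ hgU hq

lemma IsLocalizedModule.comp_of_smul_mem_range {N M' : Type*} [AddCommGroup N] [Module B N]
    [AddCommGroup M'] [Module B M'] (S : Submonoid B) (f : M →ₗ[B] M') [IsLocalizedModule S f]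
    (φ : N →ₗ[B] M) {s t : B} (hs : s ∈ S) (ht : t ∈ S)
    (hsφ : ∀ m : M, s • m ∈ LinearMap.range φ) (htφ : ∀ n : N, φ n = 0 → t • n = 0) :
    IsLocalizedModule S (f ∘ₗ φ) where
  map_units := IsLocalizedModule.map_units f
  surj y := by
    obtain ⟨⟨m, u⟩, hm⟩ := IsLocalizedModule.surj S f y
    obtain ⟨n, hn⟩ := hsφ m
    refine ⟨⟨n, ⟨s, hs⟩ * u⟩, ?_⟩
    simp only [LinearMap.comp_apply, hn, map_smul, ← hm, Submonoid.smul_def, mul_smul]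
  exists_of_eq {n₁ n₂} h := by
    obtain ⟨c, hc⟩ := IsLocalizedModule.exists_of_eq (S := S) (f := f) h
    rw [Submonoid.smul_def, Submonoid.smul_def, ← map_smul, ← map_smul, ← sub_eq_zero,
      ← map_sub] at hc
    refine ⟨⟨t, ht⟩ * c, ?_⟩
    simpa [Submonoid.smul_def, mul_smul, smul_sub, sub_eq_zero] using htφ _ hc

lemma smul_eq_zero_of_linearCombination_eq_zero (hJac : (⊥ : Ideal B).jacobson = ⊥)
    {ι : Type*} [Fintype ι] {x : ι → M} {r g : B} (hrx : ∀ m : M, r • m ∈ span B (Set.range x))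
    (hrank : ∀ J : MaximalSpectrum B, g ∉ J.asIdeal →
      Module.finrank (B ⧸ J.asIdeal) (M ⧸ (J.asIdeal • ⊤ : Submodule B M)) = Fintype.card ι)
    {v : ι → B} (hv : Fintype.linearCombination B x v = 0) : (r * g) • v = 0 := by
  rw [Fintype.linearCombination_apply] at hv
  funext i
  have hmem : r * g * v i ∈ (⊥ : Ideal B).jacobson := by
    refine Ideal.mem_sInf.mpr fun J ⟨_, hJ⟩ ↦ ?_
    by_cases hrJ : r ∈ J
    · exact J.mul_mem_right _ (J.mul_mem_right g hrJ)
    by_cases hgJ : g ∈ J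
    · exact J.mul_mem_right _ (J.mul_mem_left r hgJ)
    exact J.mul_mem_left _
      (mem_of_sum_smul_eq_zero_of_finrank_eq hrJ hrx (hrank ⟨J, hJ⟩ hgJ) hv i)
  simpa [hJac] using hmem

theorem Module.free_localizedModule_of_isLocallyConstant_finrank [Module.Finite B M]
    (hJac : (⊥ : Ideal B).jacobson = ⊥)
    (hloc : IsLocallyConstant fun m : MaximalSpectrum B ↦
      Module.finrank (B ⧸ m.asIdeal) (M ⧸ (m.asIdeal • ⊤ : Submodule B M)))
    (I : Ideal B) [I.IsMaximal] :
    Module.Free (Localization.AtPrime I) (LocalizedModule I.primeCompl M) := by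
  obtain ⟨x, r, hrI, hrx⟩ := exists_fin_finrank_smul_mem_span (M := M) I
  obtain ⟨g, hgI, hg⟩ :=
    MaximalSpectrum.exists_notMem_forall_eq_of_isLocallyConstant hloc ⟨I, ‹_›⟩
  let f := LocalizedModule.mkLinearMap I.primeCompl M ∘ₗ Fintype.linearCombination B x
  have : IsLocalizedModule I.primeCompl f :=
    .comp_of_smul_mem_range _ _ _ hrI (I.primeCompl.mul_mem hrI hgI)
      (fun m ↦ Fintype.range_linearCombination B x ▸ hrx m)
      (fun v hv ↦ smul_eq_zero_of_linearCombination_eq_zero hJac hrx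
        (fun q hq ↦ (hg q hq).trans (Fintype.card_fin _).symm) hv)
  exact Module.free_of_isLocalizedModule I.primeCompl f

end

theorem flat_of_locallyConstant_fiber_dim_general
    (B : Type*) [CommRing B]
    (hJac : (⊥ : Ideal B).jacobson = ⊥)
    (M : Type*) [AddCommGroup M] [Module B M] [Module.Finite B M]
    (hloc : IsLocallyConstant fun m : MaximalSpectrum B =>
      Module.finrank (B ⧸ m.asIdeal) (M ⧸ (m.asIdeal • ⊤ : Submodule B M))) :
    Module.Flat B M := by
  refine Module.flat_of_localized_maximal M fun I _ ↦ ?_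
  have := Module.free_localizedModule_of_isLocallyConstant_finrank hJac hloc I
  exact (Module.flat_iff_of_isLocalization (Localization.AtPrime I) I.primeCompl _).mp
    inferInstance

/-- Let `B` be a commutative noetherian ring whose Jacobson radical (the Jacobson radical of
the zero ideal) is zero, and let `M` be a finitely generated `B`-module.  If the function
sending a maximal ideal `m` of `B` (i.e. a point of the maximal spectrum of `B`, with its
Zariski topology) to `dim_{B/m} (M/mM)` is locally constant, then `M` is flat over `B`. -/
theorem flat_of_locallyConstant_fiber_dim
    (B : Type*) [CommRing B] [IsNoetherianRing B]
    (hJac : (⊥ : Ideal B).jacobson = ⊥)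
    (M : Type*) [AddCommGroup M] [Module B M] [Module.Finite B M]
    (hloc : IsLocallyConstant fun m : MaximalSpectrum B =>
      Module.finrank (B ⧸ m.asIdeal) (M ⧸ (m.asIdeal • ⊤ : Submodule B M))) :
    Module.Flat B M :=
  flat_of_locallyConstant_fiber_dim_general B hJac M hloc
end

section
/- Let R be a Banach algebra over the p-adic field ℚ_p (a complete normed commutative ℚ_p-algebra), and let N be a Banach R-module (a complete normed abelian group with an R-module structure for which scalar multiplication is bounded) which is generated as an R-module by finitely many elements e₁, …, e_n. Then there exists ε > 0 such that for any elements e′₁, …, e′_n of N with ‖e_i − e′_i‖ ≤ ε for every i, the elements e′₁, …, e′_n also generate N as an R-module. -/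
/-!
Restricting the `R`-action along `algebraMap ℚ_[p] R` makes `N` a `ℚ_[p]`-module with
`‖z • x‖ ≤ D * ‖z‖ * ‖x‖`, and the equivalent norm `x ↦ ⨆ z, ‖z • x‖ / ‖z‖` makes it a Banach
`ℚ_[p]`-space. The operator `c ↦ ∑ i, c i • e i` from `Rⁿ` to `N` is then bounded and surjective,
and surjective operators between Banach spaces form an open set: by the open mapping theorem the
operator has a right inverse `y ↦ x` with `‖x‖ ≤ M * ‖y‖`, and every operator within `1 / M` of it
is still onto. Moving each `e i` by at most `ε` moves the operator by at most `C * n * ε`.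
-/

open Finset Function Metric Set

section SMulNorm

variable {𝕜 N : Type*} [NormedField 𝕜] [NormedAddCommGroup N] [Module 𝕜 N] {D : ℝ}

variable (𝕜) in
/-- The term `z = 0` is `‖0‖ / ‖0‖ = 0`, harmless since every term is nonnegative. -/
noncomputable def smulNorm (x : N) : ℝ := ⨆ z : 𝕜, ‖z • x‖ / ‖z‖

lemma norm_smul_div_norm_le (hD : ∀ (z : 𝕜) (x : N), ‖z • x‖ ≤ D * ‖z‖ * ‖x‖)
    (z : 𝕜) (x : N) : ‖z • x‖ / ‖z‖ ≤ D * ‖x‖ := by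
  rcases eq_or_ne z 0 with rfl | hz
  · simpa using (norm_nonneg x).trans (by simpa using hD 1 x)
  · rw [div_le_iff₀ (norm_pos_iff.2 hz)]
    linarith [hD z x]

lemma norm_smul_div_norm_le_smulNorm (hD : ∀ (z : 𝕜) (x : N), ‖z • x‖ ≤ D * ‖z‖ * ‖x‖)
    (z : 𝕜) (x : N) : ‖z • x‖ / ‖z‖ ≤ smulNorm 𝕜 x :=
  le_ciSup ⟨D * ‖x‖, forall_mem_range.2 (norm_smul_div_norm_le hD · x)⟩ z

lemma norm_le_smulNorm (hD : ∀ (z : 𝕜) (x : N), ‖z • x‖ ≤ D * ‖z‖ * ‖x‖) (x : N) :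
    ‖x‖ ≤ smulNorm 𝕜 x := by
  simpa using norm_smul_div_norm_le_smulNorm hD (1 : 𝕜) x

lemma smulNorm_le (hD : ∀ (z : 𝕜) (x : N), ‖z • x‖ ≤ D * ‖z‖ * ‖x‖) (x : N) :
    smulNorm 𝕜 x ≤ D * ‖x‖ :=
  ciSup_le (norm_smul_div_norm_le hD · x)

lemma smulNorm_zero : smulNorm 𝕜 (0 : N) = 0 := by
  simp [smulNorm]

lemma smulNorm_neg (x : N) : smulNorm 𝕜 (-x) = smulNorm 𝕜 x := by
  simp [smulNorm]

lemma smulNorm_add_le (hD : ∀ (z : 𝕜) (x : N), ‖z • x‖ ≤ D * ‖z‖ * ‖x‖) (x y : N) :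
    smulNorm 𝕜 (x + y) ≤ smulNorm 𝕜 x + smulNorm 𝕜 y :=
  ciSup_le fun z => calc
    ‖z • (x + y)‖ / ‖z‖ ≤ ‖z • x‖ / ‖z‖ + ‖z • y‖ / ‖z‖ := by
      rw [smul_add, ← add_div]
      gcongr
      exact norm_add_le _ _
    _ ≤ smulNorm 𝕜 x + smulNorm 𝕜 y :=
      add_le_add (norm_smul_div_norm_le_smulNorm hD z x) (norm_smul_div_norm_le_smulNorm hD z y)

lemma smulNorm_smul_le (hD : ∀ (z : 𝕜) (x : N), ‖z • x‖ ≤ D * ‖z‖ * ‖x‖) (z : 𝕜) (x : N) :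
    smulNorm 𝕜 (z • x) ≤ ‖z‖ * smulNorm 𝕜 x := by
  have hx : 0 ≤ smulNorm 𝕜 x := (norm_nonneg x).trans (norm_le_smulNorm hD x)
  refine ciSup_le fun w => ?_
  rcases eq_or_ne w 0 with rfl | hw
  · simpa using mul_nonneg (norm_nonneg z) hx
  rcases eq_or_ne z 0 with rfl | hz
  · simp
  calc ‖w • z • x‖ / ‖w‖ = ‖z‖ * (‖(w * z) • x‖ / ‖w * z‖) := by
        rw [mul_smul, norm_mul]
        field_simp
    _ ≤ ‖z‖ * smulNorm 𝕜 x := by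
        gcongr
        exact norm_smul_div_norm_le_smulNorm hD _ x

lemma smulNorm_smul_le_of_smulCommClass {R : Type*} [SeminormedAddGroup R] [SMul R N]
    [SMulCommClass 𝕜 R N]
    (hD : ∀ (z : 𝕜) (x : N), ‖z • x‖ ≤ D * ‖z‖ * ‖x‖) {C : ℝ} (hC₀ : 0 ≤ C)
    (hC : ∀ (r : R) (x : N), ‖r • x‖ ≤ C * ‖r‖ * ‖x‖) (r : R) (x : N) :
    smulNorm 𝕜 (r • x) ≤ C * ‖r‖ * smulNorm 𝕜 x :=
  ciSup_le fun z => calc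
    ‖z • r • x‖ / ‖z‖ ≤ C * ‖r‖ * (‖z • x‖ / ‖z‖) := by
      rw [smul_comm, mul_div_assoc']
      gcongr
      exact hC r _
    _ ≤ C * ‖r‖ * smulNorm 𝕜 x :=
      mul_le_mul_of_nonneg_left (norm_smul_div_norm_le_smulNorm hD z x)
        (mul_nonneg hC₀ (norm_nonneg r))

variable (𝕜 N) in
/-- Indexing the synonym by the bound `hD` lets the norm `smulNorm 𝕜` be a global instance. -/
@[nolint unusedArguments]
def WithSMulNorm (_hD : ∀ (z : 𝕜) (x : N), ‖z • x‖ ≤ D * ‖z‖ * ‖x‖) : Type _ := N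

namespace WithSMulNorm

variable (hD : ∀ (z : 𝕜) (x : N), ‖z • x‖ ≤ D * ‖z‖ * ‖x‖)

instance : AddCommGroup (WithSMulNorm 𝕜 N hD) := inferInstanceAs (AddCommGroup N)

def equiv : WithSMulNorm 𝕜 N hD ≃+ N := AddEquiv.refl N

instance {R : Type*} [Semiring R] [Module R N] : Module R (WithSMulNorm 𝕜 N hD) :=
  inferInstanceAs (Module R N)

instance {S R : Type*} [Semiring S] [Semiring R] [SMul S R] [Module S N] [Module R N]
    [IsScalarTower S R N] : IsScalarTower S R (WithSMulNorm 𝕜 N hD) :=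
  inferInstanceAs (IsScalarTower S R N)

noncomputable instance : NormedAddCommGroup (WithSMulNorm 𝕜 N hD) :=
  AddGroupNorm.toNormedAddCommGroup
    { toFun := smulNorm 𝕜 (N := N)
      map_zero' := smulNorm_zero
      add_le' := smulNorm_add_le (N := N) hD
      neg' := smulNorm_neg (N := N)
      eq_zero_of_map_eq_zero' := fun x hx =>
        norm_le_zero_iff.1 (hx ▸ norm_le_smulNorm (N := N) hD x) }

lemma norm_def (x : WithSMulNorm 𝕜 N hD) : ‖x‖ = smulNorm 𝕜 (equiv hD x) := rfl

noncomputable instance : NormedSpace 𝕜 (WithSMulNorm 𝕜 N hD) :=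
  ⟨smulNorm_smul_le (N := N) hD⟩

instance [CompleteSpace N] : CompleteSpace (WithSMulNorm 𝕜 N hD) := by
  have hlip : LipschitzWith (Real.toNNReal 1) (equiv hD) :=
    AddMonoidHomClass.lipschitz_of_bound (equiv hD) 1 fun x => by
      simpa [norm_def] using norm_le_smulNorm hD (equiv hD x)
  have hanti : AntilipschitzWith D.toNNReal (equiv hD) :=
    AddMonoidHomClass.antilipschitz_of_bound (equiv hD) fun x =>
      (smulNorm_le hD _).trans (mul_le_mul_of_nonneg_right D.le_coe_toNNReal (norm_nonneg _))
  exact ((hanti.isUniformInducing hlip.uniformContinuous).completeSpace_congr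
    (equiv hD).surjective).2 ‹_›

end WithSMulNorm

end SMulNorm

theorem ContinuousLinearMap.isOpen_setOf_surjective {𝕜 E F : Type*} [NontriviallyNormedField 𝕜]
    [NormedAddCommGroup E] [NormedSpace 𝕜 E] [CompleteSpace E]
    [NormedAddCommGroup F] [NormedSpace 𝕜 F] [CompleteSpace F] :
    IsOpen {T : E →L[𝕜] F | Surjective T} := by
  refine Metric.isOpen_iff.2 fun T hT => ?_
  let Tsymm := T.nonlinearRightInverseOfSurjective (LinearMap.range_eq_top.2 hT)
  refine ⟨(Tsymm.nnnorm : ℝ)⁻¹, inv_pos.2 (T.nonlinearRightInverseOfSurjective_nnnorm_pos _),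
    fun S hS y => ?_⟩
  rw [mem_ball, dist_eq_norm] at hS
  have hST : ApproximatesLinearOn S T univ ‖S - T‖₊ := fun x _ x' _ => calc
    ‖S x - S x' - T (x - x')‖ = ‖(S - T) (x - x')‖ := by rw [sub_apply, map_sub, map_sub]
    _ ≤ ‖S - T‖₊ * ‖x - x'‖ := (S - T).le_opNorm _
  have hgap : 0 < (Tsymm.nnnorm : ℝ)⁻¹ - ‖S - T‖ := sub_pos.2 hS
  obtain ⟨x, -, hx⟩ := hST.surjOn_closedBall_of_nonlinearRightInverse Tsymm
    (div_nonneg (norm_nonneg y) hgap.le) (subset_univ (closedBall 0 _))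
    (show y ∈ closedBall (S 0) _ by
      rw [mem_closedBall, map_zero, dist_zero_right, coe_nnnorm, mul_div_cancel₀ _ hgap.ne'])
  exact ⟨x, hx⟩

section LinearCombination

variable {𝕜 R N ι : Type*} [NontriviallyNormedField 𝕜] [NormedRing R] [NormedAlgebra 𝕜 R]
  [NormedAddCommGroup N] [NormedSpace 𝕜 N] [Module R N] [IsScalarTower 𝕜 R N] [Fintype ι]
  {C : ℝ}

lemma norm_sum_smul_le (hC₀ : 0 ≤ C) (hC : ∀ (r : R) (x : N), ‖r • x‖ ≤ C * ‖r‖ * ‖x‖)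
    (v : ι → N) (c : ι → R) : ‖∑ i, c i • v i‖ ≤ (C * ∑ i, ‖v i‖) * ‖c‖ := calc
  ‖∑ i, c i • v i‖ ≤ ∑ i, C * ‖c i‖ * ‖v i‖ := norm_sum_le_of_le _ fun i _ => hC (c i) (v i)
  _ ≤ ∑ i, C * ‖c‖ * ‖v i‖ := by gcongr with i; exact norm_le_pi_norm c i
  _ = (C * ∑ i, ‖v i‖) * ‖c‖ := by rw [mul_sum, sum_mul]; exact sum_congr rfl fun i _ => by ring

noncomputable def linearCombinationCLM (hC₀ : 0 ≤ C)
    (hC : ∀ (r : R) (x : N), ‖r • x‖ ≤ C * ‖r‖ * ‖x‖) (v : ι → N) : (ι → R) →L[𝕜] N :=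
  ((Fintype.linearCombination R v).restrictScalars 𝕜).mkContinuous (C * ∑ i, ‖v i‖)
    (norm_sum_smul_le hC₀ hC v)

lemma linearCombinationCLM_apply (hC₀ : 0 ≤ C) (hC : ∀ (r : R) (x : N), ‖r • x‖ ≤ C * ‖r‖ * ‖x‖)
    (v : ι → N) (c : ι → R) : linearCombinationCLM (𝕜 := 𝕜) hC₀ hC v c = ∑ i, c i • v i :=
  rfl

lemma norm_linearCombinationCLM_sub_le (hC₀ : 0 ≤ C)
    (hC : ∀ (r : R) (x : N), ‖r • x‖ ≤ C * ‖r‖ * ‖x‖) (v w : ι → N) :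
    ‖linearCombinationCLM (𝕜 := 𝕜) hC₀ hC v - linearCombinationCLM hC₀ hC w‖ ≤
      C * ∑ i, ‖v i - w i‖ := by
  have hsub : linearCombinationCLM (𝕜 := 𝕜) hC₀ hC v - linearCombinationCLM hC₀ hC w =
      linearCombinationCLM hC₀ hC (v - w) := by
    ext c
    simp only [sub_apply, linearCombinationCLM_apply, Pi.sub_apply, smul_sub, sum_sub_distrib]
  rw [hsub]
  exact LinearMap.mkContinuous_norm_le _ (by positivity) _

lemma surjective_linearCombinationCLM_iff (hC₀ : 0 ≤ C)
    (hC : ∀ (r : R) (x : N), ‖r • x‖ ≤ C * ‖r‖ * ‖x‖) (v : ι → N) :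
    Surjective (linearCombinationCLM (𝕜 := 𝕜) hC₀ hC v) ↔
      Submodule.span R (range v) = ⊤ :=
  (span_range_eq_top_iff_surjective_fintypeLinearCombination R v).symm

end LinearCombination

theorem exists_forall_norm_sub_le_span_eq_top (𝕜 : Type*) {R N ι : Type*}
    [NontriviallyNormedField 𝕜] [NormedRing R] [NormedAlgebra 𝕜 R] [CompleteSpace R]
    [NormedAddCommGroup N] [NormedSpace 𝕜 N] [Module R N] [IsScalarTower 𝕜 R N] [CompleteSpace N]
    [Fintype ι] {C : ℝ} (hC₀ : 0 ≤ C) (hC : ∀ (r : R) (x : N), ‖r • x‖ ≤ C * ‖r‖ * ‖x‖)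
    (e : ι → N) (he : Submodule.span R (range e) = ⊤) :
    ∃ ε : ℝ, 0 < ε ∧ ∀ e' : ι → N,
      (∀ i, ‖e i - e' i‖ ≤ ε) → Submodule.span R (range e') = ⊤ := by
  obtain ⟨δ, hδ, hball⟩ := Metric.isOpen_iff.1
    (ContinuousLinearMap.isOpen_setOf_surjective (𝕜 := 𝕜) (E := ι → R) (F := N)) _
    ((surjective_linearCombinationCLM_iff (𝕜 := 𝕜) hC₀ hC e).2 he)
  set K := C * Fintype.card ι
  refine ⟨δ / (K + 1), by positivity, fun e' he' => ?_⟩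
  refine (surjective_linearCombinationCLM_iff (𝕜 := 𝕜) hC₀ hC e').1 (hball ?_)
  rw [mem_ball, dist_eq_norm]
  calc _ ≤ C * ∑ i, ‖e' i - e i‖ := norm_linearCombinationCLM_sub_le hC₀ hC e' e
    _ ≤ C * ∑ _i : ι, δ / (K + 1) := by
        gcongr with i
        rw [norm_sub_rev]
        exact he' i
    _ = δ * (K / (K + 1)) := by
        rw [sum_const, card_univ, nsmul_eq_mul]
        ring
    _ < δ := mul_lt_of_lt_one_right hδ ((div_lt_one (by positivity)).2 (lt_add_one K))

theorem exists_forall_norm_sub_le_span_eq_top_of_normedAlgebra (𝕜 : Type*) {R N ι : Type*}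
    [NontriviallyNormedField 𝕜] [NormedRing R] [NormedAlgebra 𝕜 R] [CompleteSpace R]
    [NormedAddCommGroup N] [Module R N] [CompleteSpace N] [Fintype ι] {C : ℝ}
    (hC : ∀ (r : R) (x : N), ‖r • x‖ ≤ C * ‖r‖ * ‖x‖)
    (e : ι → N) (he : Submodule.span R (range e) = ⊤) :
    ∃ ε : ℝ, 0 < ε ∧ ∀ e' : ι → N,
      (∀ i, ‖e i - e' i‖ ≤ ε) → Submodule.span R (range e') = ⊤ := by
  let _ : Module 𝕜 N := Module.compHom N (algebraMap 𝕜 R)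
  have : IsScalarTower 𝕜 R N := .of_algebraMap_smul fun _ _ => rfl
  set C₀ := max C 0
  have hC₀ : ∀ (r : R) (x : N), ‖r • x‖ ≤ C₀ * ‖r‖ * ‖x‖ := fun r x =>
    (hC r x).trans (by gcongr; exact le_max_left C 0)
  set D := C₀ * ‖(1 : R)‖ + 1
  have hD : ∀ (z : 𝕜) (x : N), ‖z • x‖ ≤ D * ‖z‖ * ‖x‖ := fun z x => calc
    ‖z • x‖ ≤ C₀ * ‖algebraMap 𝕜 R z‖ * ‖x‖ := hC₀ _ x
    _ = C₀ * ‖(1 : R)‖ * ‖z‖ * ‖x‖ := by rw [norm_algebraMap]; ring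
    _ ≤ D * ‖z‖ * ‖x‖ := by gcongr; exact le_add_of_nonneg_right zero_le_one
  obtain ⟨ε, hε, hstable⟩ := exists_forall_norm_sub_le_span_eq_top 𝕜
    (N := WithSMulNorm 𝕜 N hD) (le_max_right C 0)
    (fun r x => smulNorm_smul_le_of_smulCommClass hD (le_max_right C 0) hC₀ r x) e he
  refine ⟨ε / D, by positivity, fun e' he' => hstable e' fun i => ?_⟩
  -- the goal is about the norm of `WithSMulNorm 𝕜 N hD`, which is `smulNorm 𝕜` by definition
  calc smulNorm 𝕜 (e i - e' i) ≤ D * ‖e i - e' i‖ := smulNorm_le hD _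
    _ ≤ D * (ε / D) := by gcongr; exact he' i
    _ = ε := mul_div_cancel₀ ε (by positivity)

/-- Let `R` be a Banach algebra over `ℚ_p` (a complete normed commutative `ℚ_p`-algebra) and
let `N` be a Banach `R`-module (a complete normed abelian group with an `R`-module structure
whose scalar multiplication is bounded: `‖r • x‖ ≤ C * ‖r‖ * ‖x‖` for some constant `C`),
generated as an `R`-module by finitely many elements `e 0, …, e (n-1)`.  Then there is an
`ε > 0` such that any elements `e' 0, …, e' (n-1)` of `N` with `‖e i - e' i‖ ≤ ε` for all `i`
also generate `N` as an `R`-module. -/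
theorem generators_stable_under_perturbation
    (p : ℕ) [Fact p.Prime]
    (R : Type*) [NormedCommRing R] [NormedAlgebra ℚ_[p] R] [CompleteSpace R]
    (N : Type*) [NormedAddCommGroup N] [Module R N] [CompleteSpace N]
    (C : ℝ) (hC : ∀ (r : R) (x : N), ‖r • x‖ ≤ C * ‖r‖ * ‖x‖)
    (n : ℕ) (e : Fin n → N) (he : Submodule.span R (Set.range e) = ⊤) :
    ∃ ε : ℝ, 0 < ε ∧ ∀ e' : Fin n → N,
      (∀ i, ‖e i - e' i‖ ≤ ε) → Submodule.span R (Set.range e') = ⊤ :=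
  exists_forall_norm_sub_le_span_eq_top_of_normedAlgebra ℚ_[p] hC e he
end

section
/- Let R be a commutative ring, let b be an integer, and let Q be a bounded-above cochain complex of finite projective R-modules with Hⁱ(Q) = 0 for all i > b. Then ker(d^b : Q^b → Q^{b+1}) is a finite projective R-module, and the truncated complex P = [⋯ → Q^{b−2} → Q^{b−1} → ker(d^b)] (concentrated in degrees ≤ b, agreeing with Q in degrees < b and with ker(d^b) in degree b) admits a quasi-isomorphism P → Q given by the identity in degrees < b and the inclusion ker(d^b) ⊆ Q^b in degree b. In particular, Q is quasi-isomorphic to a complex of finite projective R-modules vanishing in degrees > b, and if moreover Qⁱ = 0 for all i < a then this complex vanishes outside the degree range [a, b]. -/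
open CategoryTheory Limits

/-! Since `Q` vanishes in high degrees and is exact above `b`, the kernels `Zⁱ = ker dⁱ` are
finite projective for `i ≥ b` by descending induction: `Zⁱ = 0` for `i ≫ 0`, and exactness at
`i + 1` makes `dⁱ : Qⁱ → Zⁱ⁺¹` surjective onto a projective module, so it splits and `Zⁱ` is a
direct summand of `Qⁱ`. The truncation is the canonical one, `Q.truncLE b`: its inclusion into `Q`
is a quasi-isomorphism precisely because `Q` is exact above `b`, and its components are `Qⁱ` for
`i < b` and the cycles `Z^b` in degree `b`. -/

namespace LinearMap

variable {R M N : Type*} [Ring R] [AddCommGroup M] [Module R M] [AddCommGroup N] [Module R N]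
  [Module.Projective R N] {f : M →ₗ[R] N}

theorem exists_retraction_ker_subtype_of_surjective (hf : Function.Surjective f) :
    ∃ r : M →ₗ[R] ker f, r ∘ₗ (ker f).subtype = id := by
  obtain ⟨s, hs⟩ := Module.projective_lifting_property f id hf
  have hs' (y : N) : f (s y) = y := LinearMap.congr_fun hs y
  refine ⟨(id - s ∘ₗ f).codRestrict (ker f) fun x => by simp [hs'], ?_⟩
  ext ⟨x, hx⟩
  simp [mem_ker.1 hx]

theorem finite_ker_of_surjective [Module.Finite R M] (hf : Function.Surjective f) :
    Module.Finite R (ker f) :=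
  have ⟨r, hr⟩ := exists_retraction_ker_subtype_of_surjective hf
  Module.Finite.of_surjective r fun x => ⟨x, LinearMap.congr_fun hr x⟩

theorem projective_ker_of_surjective [Module.Projective R M] (hf : Function.Surjective f) :
    Module.Projective R (ker f) :=
  have ⟨r, hr⟩ := exists_retraction_ker_subtype_of_surjective hf
  Module.Projective.of_split _ r hr

end LinearMap

namespace ModuleCat

variable {R : Type*} [Ring R] {M N : ModuleCat R}

theorem finite_and_projective_of_iso (e : M ≅ N)
    (h : Module.Finite R N ∧ Module.Projective R N) :
    Module.Finite R M ∧ Module.Projective R M :=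
  have := h.1
  have := h.2
  ⟨.equiv e.toLinearEquiv.symm, .of_equiv e.toLinearEquiv.symm⟩

theorem finite_and_projective_of_isZero (h : IsZero M) :
    Module.Finite R M ∧ Module.Projective R M :=
  have := subsingleton_of_isZero h
  ⟨inferInstance, inferInstance⟩

end ModuleCat

namespace HomologicalComplex

variable {C ι ι' : Type*} [Category C] [HasZeroMorphisms C] [HasZeroObject C]
  {c : ComplexShape ι} {c' : ComplexShape ι'} (K : HomologicalComplex C c')
  [∀ i', K.HasHomology i']

section

variable (e : c.Embedding c') [e.IsTruncGE] {i : ι} {i' : ι'} (hi' : e.f i = i')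

lemma πTruncGE_f_eq_truncGEXIso_inv (hi : ¬ e.BoundaryGE i) :
    (K.πTruncGE e).f i' = (K.truncGEXIso e hi' hi).inv := by
  rw [πTruncGE, e.liftExtend_f _ _ hi', restrictionToTruncGE'_f_eq_iso_hom_iso_inv _ e hi' hi]
  simp only [restrictionXIso, eqToIso.inv, eqToIso.hom, Category.assoc, eqToHom_trans_assoc,
    eqToHom_refl, Category.id_comp]
  rfl

lemma πTruncGE_f_comp_truncGEXIsoOpcycles_hom (hi : e.BoundaryGE i) :
    (K.πTruncGE e).f i' ≫ (K.truncGEXIsoOpcycles e hi' hi).hom = K.pOpcycles i' := by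
  rw [πTruncGE, e.liftExtend_f _ _ hi',
    restrictionToTruncGE'_f_eq_iso_hom_pOpcycles_iso_inv _ e hi' hi]
  -- `K.truncGE e` is `(K.truncGE' e).extend e` only up to unfolding, which `simp` does not see
  change ((K.restrictionXIso e hi').inv ≫ ((K.restrictionXIso e hi').hom ≫ K.pOpcycles i' ≫
    (K.truncGE'XIsoOpcycles e hi' hi).inv) ≫ ((K.truncGE' e).extendXIso e hi').inv) ≫
    ((K.truncGE' e).extendXIso e hi').hom ≫ (K.truncGE'XIsoOpcycles e hi' hi).hom = _
  simp

end

variable (e : c.Embedding c') [e.IsTruncLE] {i : ι} {i' : ι'} (hi' : e.f i = i')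

lemma ιTruncLE_f_eq_truncLEXIso_hom (hi : ¬ e.BoundaryLE i) :
    (K.ιTruncLE e).f i' = (K.truncLEXIso e hi' hi).hom :=
  congrArg Quiver.Hom.unop (K.op.πTruncGE_f_eq_truncGEXIso_inv e.op hi' (by simpa))

lemma ιTruncLE_f_eq_truncLEXIsoCycles_hom_comp_iCycles (hi : e.BoundaryLE i) :
    (K.ιTruncLE e).f i' = (K.truncLEXIsoCycles e hi' hi).hom ≫ K.iCycles i' := by
  have h := K.op.πTruncGE_f_comp_truncGEXIsoOpcycles_hom e.op hi' (by simpa)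
  rw [← Iso.inv_comp_eq]
  apply Quiver.Hom.op_inj
  change (K.op.πTruncGE e.op).f i' ≫ (K.op.truncGEXIsoOpcycles e.op hi' (by simpa)).hom ≫
    (K.opcyclesOpIso i').hom = _
  rw [reassoc_of% h]
  exact (K.sc i').op_pOpcycles_opcyclesOpIso_hom

end HomologicalComplex

namespace CochainComplex

section

variable {C : Type*} [Category C] [HasZeroMorphisms C] [HasZeroObject C]
  (K : CochainComplex C ℤ) [∀ i, K.HasHomology i]

lemma ιTruncLE_f_eq_truncLEXIso_hom (n i : ℤ) (hi : i < n) :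
    (K.ιTruncLE n).f i = (K.truncLEXIso n i hi).hom :=
  HomologicalComplex.ιTruncLE_f_eq_truncLEXIso_hom _ _ _ _

instance (n i : ℤ) : Mono ((K.ιTruncLE n).f i) :=
  inferInstanceAs (Mono ((HomologicalComplex.ιTruncLE K (ComplexShape.embeddingUpIntLE n)).f i))

noncomputable def truncLEXIsoKernel (n : ℤ) [HasKernel (K.d n (n + 1))] :
    (K.truncLE n).X n ≅ kernel (K.d n (n + 1)) :=
  K.truncLEXIsoCycles n ≪≫
    (K.cyclesIsKernel n (n + 1) (by simp)).conePointUniqueUpToIso (limit.isLimit _)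

lemma ιTruncLE_f_self (n : ℤ) [HasKernel (K.d n (n + 1))] :
    (K.ιTruncLE n).f n = (K.truncLEXIsoKernel n).hom ≫ kernel.ι (K.d n (n + 1)) := by
  have h : ((K.cyclesIsKernel n (n + 1) (by simp)).conePointUniqueUpToIso
      (limit.isLimit _)).hom ≫ kernel.ι (K.d n (n + 1)) = K.iCycles n :=
    IsLimit.conePointUniqueUpToIso_hom_comp _ _ WalkingParallelPair.zero
  rw [truncLEXIsoKernel, Iso.trans_hom, Category.assoc, h]
  exact HomologicalComplex.ιTruncLE_f_eq_truncLEXIsoCycles_hom_comp_iCycles _ _ _ _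

end

variable {R : Type*} [Ring R] (Q : CochainComplex (ModuleCat R) ℤ)

open LinearMap in
theorem finite_and_projective_ker_d_of_exactAt {i : ℤ} [Module.Finite R (Q.X i)]
    [Module.Projective R (Q.X i)] (hQ : Q.ExactAt (i + 1))
    (hZ : Module.Projective R (ker (Q.d (i + 1) (i + 1 + 1)).hom)) :
    Module.Finite R (ker (Q.d i (i + 1)).hom) ∧ Module.Projective R (ker (Q.d i (i + 1)).hom) := by
  rw [Q.exactAt_iff' i (i + 1) (i + 1 + 1) (by simp) (by simp),
    ShortComplex.moduleCat_exact_iff] at hQ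
  have hdd (x : Q.X i) : Q.d i (i + 1) x ∈ ker (Q.d (i + 1) (i + 1 + 1)).hom :=
    ConcreteCategory.congr_hom (Q.d_comp_d i (i + 1) (i + 1 + 1)) x
  let δ := (Q.d i (i + 1)).hom.codRestrict _ hdd
  have hδ : Function.Surjective δ := fun ⟨y, hy⟩ =>
    have ⟨x, hx⟩ := hQ y hy
    ⟨x, Subtype.ext hx⟩
  rw [← ker_codRestrict _ _ hdd]
  exact ⟨finite_ker_of_surjective hδ, projective_ker_of_surjective hδ⟩

theorem finite_and_projective_ker_d_of_isLE
    (hQ : ∀ i, Module.Finite R (Q.X i) ∧ Module.Projective R (Q.X i))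
    (c b : ℤ) [Q.IsStrictlyLE c] [Q.IsLE b] {i : ℤ} (hi : b ≤ i) :
    Module.Finite R (LinearMap.ker (Q.d i (i + 1)).hom) ∧
      Module.Projective R (LinearMap.ker (Q.d i (i + 1)).hom) := by
  suffices h : ∀ k : ℕ, ∀ i, c < i + k → b ≤ i →
      Module.Finite R (LinearMap.ker (Q.d i (i + 1)).hom) ∧
        Module.Projective R (LinearMap.ker (Q.d i (i + 1)).hom) from
    h (c + 1 - i).toNat i (by omega) hi
  intro k
  induction k with
  | zero =>
    intro i hci _
    have := ModuleCat.subsingleton_of_isZero (Q.isZero_of_isStrictlyLE c i (by omega))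
    exact ⟨inferInstance, inferInstance⟩
  | succ k ih =>
    intro i hci hbi
    by_cases hck : c < i + k
    · exact ih i hck hbi
    · have := (hQ i).1
      have := (hQ i).2
      exact Q.finite_and_projective_ker_d_of_exactAt (Q.exactAt_of_isLE b (i + 1))
        (ih (i + 1) (by omega) (by omega)).2

theorem finite_and_projective_truncLE_X
    (hQ : ∀ i, Module.Finite R (Q.X i) ∧ Module.Projective R (Q.X i)) (n : ℤ)
    (hn : Module.Finite R ↥(kernel (Q.d n (n + 1))) ∧
      Module.Projective R ↥(kernel (Q.d n (n + 1)))) (i : ℤ) :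
    Module.Finite R ((Q.truncLE n).X i) ∧ Module.Projective R ((Q.truncLE n).X i) := by
  rcases lt_trichotomy i n with hi | rfl | hi
  · exact ModuleCat.finite_and_projective_of_iso (Q.truncLEXIso n i hi) (hQ i)
  · exact ModuleCat.finite_and_projective_of_iso (Q.truncLEXIsoKernel i) hn
  · exact ModuleCat.finite_and_projective_of_isZero (Q.truncLE n |>.isZero_of_isStrictlyLE n i)

end CochainComplex

/-- Let `R` be a commutative ring, `b` an integer, and `Q` a bounded-above cochain complex of
finite projective `R`-modules with `Hⁱ(Q) = 0` for `i > b`.  Then `ker(d^b : Q^b → Q^{b+1})`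
is a finite projective `R`-module, and the canonical truncation
`P = [⋯ → Q^{b-2} → Q^{b-1} → ker(d^b)]`, with the inclusion map into `Q` (the identity in
degrees `< b` and the inclusion `ker(d^b) ⊆ Q^b` in degree `b`), is a quasi-isomorphism
`P → Q`.  In particular, `Q` is quasi-isomorphic to a complex of finite projective
`R`-modules vanishing in degrees `> b`, and if moreover `Qⁱ = 0` for `i < a` then this
complex may be taken to vanish outside `[a, b]`. -/
theorem truncation_below_of_finite_projective_complex
    (R : Type*) [CommRing R] (b : ℤ)
    (Q : CochainComplex (ModuleCat R) ℤ)
    (hQfp : ∀ i, Module.Finite R (Q.X i) ∧ Module.Projective R (Q.X i))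
    (hQbdd : ∃ c : ℤ, ∀ i : ℤ, c < i → IsZero (Q.X i))
    (hH : ∀ i : ℤ, b < i → IsZero (Q.homology i)) :
    (Module.Finite R ↥(kernel (Q.d b (b + 1))) ∧
      Module.Projective R ↥(kernel (Q.d b (b + 1)))) ∧
    (∃ (P : CochainComplex (ModuleCat R) ℤ) (ι : P ⟶ Q)
      (e_b : P.X b ≅ kernel (Q.d b (b + 1)))
      (e : ∀ i : ℤ, i < b → (P.X i ≅ Q.X i)),
      (∀ i : ℤ, b < i → IsZero (P.X i)) ∧
      ι.f b = e_b.hom ≫ kernel.ι (Q.d b (b + 1)) ∧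
      (∀ (i : ℤ) (hi : i < b), ι.f i = (e i hi).hom) ∧
      QuasiIso ι ∧
      (∀ i, Module.Finite R (P.X i) ∧ Module.Projective R (P.X i))) ∧
    (∀ a : ℤ, (∀ i : ℤ, i < a → IsZero (Q.X i)) →
      ∃ (P' : CochainComplex (ModuleCat R) ℤ) (f : P' ⟶ Q),
        QuasiIso f ∧
        (∀ i, Module.Finite R (P'.X i) ∧ Module.Projective R (P'.X i)) ∧
        (∀ i : ℤ, (i < a ∨ b < i) → IsZero (P'.X i))) := by
  obtain ⟨c, hc⟩ := hQbdd
  have : Q.IsStrictlyLE c := (Q.isStrictlyLE_iff c).2 hc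
  have : Q.IsLE b := (Q.isLE_iff b).2 fun i hi => (Q.exactAt_iff_isZero_homology i).2 (hH i hi)
  have hker : Module.Finite R ↥(kernel (Q.d b (b + 1))) ∧
      Module.Projective R ↥(kernel (Q.d b (b + 1))) :=
    ModuleCat.finite_and_projective_of_iso (ModuleCat.kernelIsoKer _)
      (Q.finite_and_projective_ker_d_of_isLE hQfp c b le_rfl)
  have hP := Q.finite_and_projective_truncLE_X hQfp b hker
  refine ⟨hker, ⟨Q.truncLE b, Q.ιTruncLE b, Q.truncLEXIsoKernel b,
    fun i hi => Q.truncLEXIso b i hi, fun i hi => (Q.truncLE b).isZero_of_isStrictlyLE b i hi,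
    Q.ιTruncLE_f_self b, Q.ιTruncLE_f_eq_truncLEXIso_hom b, inferInstance, hP⟩,
    fun a ha => ⟨Q.truncLE b, Q.ιTruncLE b, inferInstance, hP, ?_⟩⟩
  rintro i (hi | hi)
  · exact (ha i hi).of_mono ((Q.ιTruncLE b).f i)
  · exact (Q.truncLE b).isZero_of_isStrictlyLE b i hi
end

section
/- Let R be a commutative noetherian ring, let Φ be an n × m matrix over R, and let r be a natural number with r ≤ n. Suppose that every (n−r+1) × (n−r+1) minor of Φ vanishes, and that the ideal of R generated by all (n−r) × (n−r) minors of Φ is generated by a single element a which is not a zero-divisor in R. Then the image of the R-linear map Rᵐ → Rⁿ given by Φ is a flat R-module, and for every prime ideal p of R its localization at p is a free R_p-module of rank n − r. -/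
/-!
Over a local ring, a principal ideal `(a)` with `a` a non-zero-divisor is generated by a unit
multiple of one of any given set of generators. So after localizing at a prime, some
`(n - r)`-minor `d = det Φ[I, J]` is a non-zero-divisor dividing all `(n - r)`-minors. The
columns `J` are then independent (multiply by the adjugate of `Φ[I, J]`), and by Cramer's rule
every column of `Φ` lies in their span, so the image is free of rank `n - r`. Localization
commutes with images, and flatness can be checked at maximal ideals.
-/

open Function Matrix
open scoped nonZeroDivisors

lemma IsLocalRing.exists_associated_mem_of_span_eq_span_singleton {R : Type*} [CommRing R]
    [IsLocalRing R] {T : Set R} {a : R} (ha : a ∈ R⁰) (h : Ideal.span T = Ideal.span {a}) :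
    ∃ x ∈ T, Associated a x := by
  by_contra! hT
  have hle : Ideal.span T ≤ Ideal.span {a} * maximalIdeal R := by
    refine Ideal.span_le.mpr fun x hx => ?_
    obtain ⟨b, rfl⟩ := Ideal.mem_span_singleton'.mp (h ▸ Ideal.subset_span hx)
    exact Ideal.mem_span_singleton_mul.mpr ⟨b, (IsLocalRing.mem_maximalIdeal b).mpr
      fun hb => hT _ hx ⟨hb.unit, mul_comm _ _⟩, mul_comm _ _⟩
  obtain ⟨z, hz, hza⟩ := Ideal.mem_span_singleton_mul.mp (hle (h ▸ Ideal.mem_span_singleton_self a))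
  have hz1 : 1 - z = 0 := (mem_nonZeroDivisors_iff_left.mp ha) _ (by rw [mul_sub, hza]; ring)
  exact (IsLocalRing.mem_maximalIdeal z).mp hz (sub_eq_zero.mp hz1 ▸ isUnit_one)

namespace Matrix

variable {R : Type*} [CommRing R] {ι κ : Type*}

def minors (A : Matrix ι κ R) (k : ℕ) : Set R :=
  {x | ∃ (f : Fin k → ι) (g : Fin k → κ), Injective f ∧ Injective g ∧ (A.submatrix f g).det = x}

lemma det_submatrix_map {T : Type*} [CommRing T] (φ : R →+* T) (A : Matrix ι κ R) {k : ℕ}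
    (f : Fin k → ι) (g : Fin k → κ) : ((A.map φ).submatrix f g).det = φ (A.submatrix f g).det := by
  rw [submatrix_map, ← RingHom.mapMatrix_apply, RingHom.map_det]

lemma minors_map {T : Type*} [CommRing T] (φ : R →+* T) (A : Matrix ι κ R) (k : ℕ) :
    (A.map φ).minors k = φ '' A.minors k := by
  ext x
  constructor
  · rintro ⟨f, g, hf, hg, rfl⟩
    exact ⟨_, ⟨f, g, hf, hg, rfl⟩, (A.det_submatrix_map φ f g).symm⟩
  · rintro ⟨_, ⟨f, g, hf, hg, rfl⟩, rfl⟩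
    exact ⟨f, g, hf, hg, A.det_submatrix_map φ f g⟩

lemma det_submatrix_eq_zero_of_not_injective_right (A : Matrix ι κ R) {k : ℕ} (f : Fin k → ι)
    {g : Fin k → κ} (hg : ¬Injective g) : (A.submatrix f g).det = 0 := by
  obtain ⟨s, t, hst, hne⟩ := Function.not_injective_iff.mp hg
  exact det_zero_of_column_eq hne (by simp [hst])

lemma det_submatrix_eq_zero_of_not_injective_left (A : Matrix ι κ R) {k : ℕ} {f : Fin k → ι}
    (hf : ¬Injective f) (g : Fin k → κ) : (A.submatrix f g).det = 0 := by
  rw [← det_transpose, transpose_submatrix]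
  exact Aᵀ.det_submatrix_eq_zero_of_not_injective_right g hf

lemma det_submatrix_eq_zero_of_forall_injective (A : Matrix ι κ R) {k : ℕ}
    (hA : ∀ (f : Fin k → ι) (g : Fin k → κ), Injective f → Injective g → (A.submatrix f g).det = 0)
    (f : Fin k → ι) (g : Fin k → κ) : (A.submatrix f g).det = 0 := by
  by_cases hf : Injective f
  · by_cases hg : Injective g
    · exact hA f g hf hg
    · exact A.det_submatrix_eq_zero_of_not_injective_right f hg
  · exact A.det_submatrix_eq_zero_of_not_injective_left hf g

lemma det_submatrix_snoc_snoc (A : Matrix ι κ R) {k : ℕ} (I : Fin k → ι) (J : Fin k → κ)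
    (i : ι) (l : κ) :
    (A.submatrix (Fin.snoc I i) (Fin.snoc J l)).det =
      ∑ t : Fin k, (-1) ^ (k + t : ℕ) * A i (J t) *
          (A.submatrix I (Fin.snoc J l ∘ (Fin.castSucc t).succAbove)).det +
        A i l * (A.submatrix I J).det := by
  rw [det_succ_row _ (Fin.last k), Fin.sum_univ_castSucc]
  simp [Fin.succAbove_last, submatrix_submatrix, Fin.snoc_comp_castSucc]

/- Cramer's rule: expanding the vanishing minor with rows `I, i` and columns `J, l` along row `i`
writes `d * A i l` as a combination of the `A i (J t)` whose coefficients are `k`-minors with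
rows `I`, hence multiples of `d`. -/
lemma col_mem_range_mulVecLin_submatrix [Fintype κ] (A : Matrix ι κ R) {k : ℕ}
    (I : Fin k → ι) (J : Fin k → κ) (hd : (A.submatrix I J).det ∈ R⁰)
    (hdvd : ∀ g : Fin k → κ, (A.submatrix I J).det ∣ (A.submatrix I g).det)
    (hvanish : ∀ (f : Fin (k + 1) → ι) (g : Fin (k + 1) → κ), (A.submatrix f g).det = 0)
    (l : κ) : A.col l ∈ LinearMap.range (A.submatrix id J).mulVecLin := by
  set d := (A.submatrix I J).det
  choose y hy using fun t : Fin k => hdvd (Fin.snoc J l ∘ (Fin.castSucc t).succAbove)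
  refine ⟨fun t => -((-1) ^ (k + t : ℕ) * y t), funext fun i => ?_⟩
  have hexp := (hvanish _ _).symm.trans (A.det_submatrix_snoc_snoc I J i l)
  simp_rw [hy] at hexp
  apply (mul_cancel_left_mem_nonZeroDivisors hd).mp
  have hsum : ∑ t : Fin k, (-1) ^ (k + t : ℕ) * A i (J t) * (d * y t) =
      d * ∑ t : Fin k, A i (J t) * ((-1) ^ (k + t : ℕ) * y t) := by
    rw [Finset.mul_sum]
    exact Finset.sum_congr rfl fun _ _ => by ring
  simp only [mulVecLin_apply, mulVec, dotProduct, submatrix_apply, id, mul_neg,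
    Finset.sum_neg_distrib, col_apply]
  linear_combination hexp + hsum

lemma range_mulVecLin_eq_range_submatrix [Fintype κ] (A : Matrix ι κ R) {k : ℕ}
    (I : Fin k → ι) (J : Fin k → κ) (hd : (A.submatrix I J).det ∈ R⁰)
    (hdvd : ∀ g : Fin k → κ, (A.submatrix I J).det ∣ (A.submatrix I g).det)
    (hvanish : ∀ (f : Fin (k + 1) → ι) (g : Fin (k + 1) → κ), (A.submatrix f g).det = 0) :
    LinearMap.range A.mulVecLin = LinearMap.range (A.submatrix id J).mulVecLin := by
  refine le_antisymm ?_ ?_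
  · rw [range_mulVecLin A, Submodule.span_le]
    rintro _ ⟨l, rfl⟩
    exact A.col_mem_range_mulVecLin_submatrix I J hd hdvd hvanish l
  · rw [range_mulVecLin, range_mulVecLin]
    exact Submodule.span_mono (Set.range_comp_subset_range J A.col)

lemma mulVecLin_submatrix_injective [Fintype κ] (A : Matrix ι κ R) {k : ℕ}
    (I : Fin k → ι) (J : Fin k → κ) (hd : (A.submatrix I J).det ∈ R⁰) :
    Injective (A.submatrix id J).mulVecLin := fun _ _ h =>
  mulVec_injective_of_det_mem_nonZeroDivisors hd (congrArg (· ∘ I) h)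

lemma nonempty_range_mulVecLin_equiv [Fintype κ] (A : Matrix ι κ R) {k : ℕ}
    (I : Fin k → ι) (J : Fin k → κ) (hd : (A.submatrix I J).det ∈ R⁰)
    (hdvd : ∀ g : Fin k → κ, (A.submatrix I J).det ∣ (A.submatrix I g).det)
    (hvanish : ∀ (f : Fin (k + 1) → ι) (g : Fin (k + 1) → κ), (A.submatrix f g).det = 0) :
    Nonempty (LinearMap.range A.mulVecLin ≃ₗ[R] (Fin k → R)) :=
  ⟨(LinearEquiv.ofEq _ _ (A.range_mulVecLin_eq_range_submatrix I J hd hdvd hvanish)).trans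
    (LinearEquiv.ofInjective _ (A.mulVecLin_submatrix_injective I J hd)).symm⟩

theorem nonempty_range_mulVecLin_equiv_of_isLocalRing [IsLocalRing R] [Fintype κ]
    (A : Matrix ι κ R) {k : ℕ} {a : R} (ha : a ∈ R⁰)
    (hvanish : ∀ (f : Fin (k + 1) → ι) (g : Fin (k + 1) → κ),
      Injective f → Injective g → (A.submatrix f g).det = 0)
    (hgen : Ideal.span (A.minors k) = Ideal.span {a}) :
    Nonempty (LinearMap.range A.mulVecLin ≃ₗ[R] (Fin k → R)) := by
  obtain ⟨_, ⟨I, J, hI, -, rfl⟩, hassoc⟩ :=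
    IsLocalRing.exists_associated_mem_of_span_eq_span_singleton ha hgen
  refine A.nonempty_range_mulVecLin_equiv I J ?_ (fun g => ?_)
    (A.det_submatrix_eq_zero_of_forall_injective hvanish)
  · obtain ⟨u, hu⟩ := hassoc
    exact hu ▸ mul_mem ha u.isUnit.mem_nonZeroDivisors
  · by_cases hg : Injective g
    · exact hassoc.symm.dvd.trans
        (Ideal.mem_span_singleton.mp (hgen ▸ Ideal.subset_span ⟨I, g, hI, hg, rfl⟩))
    · rw [A.det_submatrix_eq_zero_of_not_injective_right I hg]
      exact dvd_zero _

noncomputable def localizedModuleRangeEquiv [Fintype ι] [Fintype κ] (p : Submonoid R)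
    (A : Matrix ι κ R) :
    LocalizedModule p (LinearMap.range A.mulVecLin) ≃ₗ[Localization p]
      LinearMap.range (A.map (algebraMap R (Localization p))).mulVecLin :=
  let fι : (ι → R) →ₗ[R] (ι → Localization p) := .pi fun i => Algebra.linearMap R _ ∘ₗ .proj i
  let fκ : (κ → R) →ₗ[R] (κ → Localization p) := .pi fun i => Algebra.linearMap R _ ∘ₗ .proj i
  have hmap : (IsLocalizedModule.map p fκ fι A.mulVecLin).extendScalarsOfIsLocalization p
      (Localization p) = (A.map (algebraMap R (Localization p))).mulVecLin := by
    apply LinearMap.restrictScalars_injective R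
    refine IsLocalizedModule.ext p fκ (IsLocalizedModule.map_units fι) ?_
    rw [LinearMap.restrictScalars_extendScalarsOfIsLocalization, IsLocalizedModule.map_comp]
    ext x i
    simp [fι, fκ, mulVec, dotProduct, map_sum]
  ((IsLocalizedModule.iso p ((LinearMap.range A.mulVecLin).toLocalized' (Localization p) p fι)
    ).extendScalarsOfIsLocalization p (Localization p)).trans
    (LinearEquiv.ofEq _ _ (by
      rw [LinearMap.localized'_range_eq_range_localizedMap _ p fκ fι, hmap]))

theorem nonempty_localizedModule_range_equiv [Fintype ι] [Fintype κ] (p : Ideal R) [p.IsPrime]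
    (A : Matrix ι κ R) {k : ℕ} {a : R} (ha : a ∈ R⁰)
    (hvanish : ∀ (f : Fin (k + 1) → ι) (g : Fin (k + 1) → κ),
      Injective f → Injective g → (A.submatrix f g).det = 0)
    (hgen : Ideal.span (A.minors k) = Ideal.span {a}) :
    Nonempty (LocalizedModule p.primeCompl (LinearMap.range A.mulVecLin) ≃ₗ[Localization.AtPrime p]
      (Fin k → Localization.AtPrime p)) := by
  let φ := algebraMap R (Localization.AtPrime p)
  have ha' : φ a ∈ (Localization.AtPrime p)⁰ :=
    IsLocalization.map_nonZeroDivisors_le p.primeCompl _ (Submonoid.mem_map_of_mem _ ha)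
  have hvanish' (f : Fin (k + 1) → ι) (g : Fin (k + 1) → κ) (hf : Injective f)
      (hg : Injective g) : ((A.map φ).submatrix f g).det = 0 := by
    rw [det_submatrix_map, hvanish f g hf hg, map_zero]
  have hgen' : Ideal.span ((A.map φ).minors k) = Ideal.span {φ a} := by
    rw [minors_map, ← Ideal.map_span, hgen, Ideal.map_span, Set.image_singleton]
  obtain ⟨e⟩ := (A.map φ).nonempty_range_mulVecLin_equiv_of_isLocalRing ha' hvanish' hgen'
  exact ⟨(A.localizedModuleRangeEquiv p.primeCompl).trans e⟩

end Matrix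

theorem image_flat_of_fitting_ideal_principal_general
    (R : Type*) [CommRing R]
    (n m r : ℕ)
    (Φ : Matrix (Fin n) (Fin m) R)
    (a : R) (ha : a ∈ nonZeroDivisors R)
    (hvanish : ∀ (f : Fin (n - r + 1) → Fin n) (g : Fin (n - r + 1) → Fin m),
      Function.Injective f → Function.Injective g → (Φ.submatrix f g).det = 0)
    (hgen : Ideal.span {x : R | ∃ (f : Fin (n - r) → Fin n) (g : Fin (n - r) → Fin m),
        Function.Injective f ∧ Function.Injective g ∧ (Φ.submatrix f g).det = x} =
      Ideal.span {a}) :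
    Module.Flat R (LinearMap.range Φ.mulVecLin) ∧
      ∀ (p : Ideal R) (hp : p.IsPrime),
        haveI : p.IsPrime := hp
        Module.Free (Localization.AtPrime p)
          (LocalizedModule p.primeCompl (LinearMap.range Φ.mulVecLin)) ∧
        Module.finrank (Localization.AtPrime p)
          (LocalizedModule p.primeCompl (LinearMap.range Φ.mulVecLin)) = n - r := by
  have hloc (p : Ideal R) [p.IsPrime] := Φ.nonempty_localizedModule_range_equiv p ha hvanish hgen
  refine ⟨Module.flat_of_localized_maximal _ fun P _ => ?_, fun p _ => ?_⟩
  · obtain ⟨e⟩ := hloc P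
    have := Module.Free.of_equiv e.symm
    exact Module.Flat.trans R (Localization.AtPrime P) _
  · obtain ⟨e⟩ := hloc p
    exact ⟨.of_equiv e.symm, by rw [e.finrank_eq, Module.finrank_fin_fun]⟩

/-- Let `R` be a commutative noetherian ring, `Φ` an `n × m` matrix over `R`, and `r ≤ n`.
Assume every `(n-r+1) × (n-r+1)` minor of `Φ` vanishes and that the ideal generated by the
`(n-r) × (n-r)` minors of `Φ` is generated by a single non-zero-divisor `a`.  Then the image
of the linear map `R^m → R^n` given by `Φ` is flat, and its localization at every prime `p`
is a free module of rank `n - r` over the localization `R_p`. -/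
theorem image_flat_of_fitting_ideal_principal
    (R : Type*) [CommRing R] [IsNoetherianRing R]
    (n m r : ℕ) (hr : r ≤ n)
    (Φ : Matrix (Fin n) (Fin m) R)
    (a : R) (ha : a ∈ nonZeroDivisors R)
    (hvanish : ∀ (f : Fin (n - r + 1) → Fin n) (g : Fin (n - r + 1) → Fin m),
      Function.Injective f → Function.Injective g → (Φ.submatrix f g).det = 0)
    (hgen : Ideal.span {x : R | ∃ (f : Fin (n - r) → Fin n) (g : Fin (n - r) → Fin m),
        Function.Injective f ∧ Function.Injective g ∧ (Φ.submatrix f g).det = x} =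
      Ideal.span {a}) :
    Module.Flat R (LinearMap.range Φ.mulVecLin) ∧
      ∀ (p : Ideal R) (hp : p.IsPrime),
        haveI : p.IsPrime := hp
        Module.Free (Localization.AtPrime p)
          (LocalizedModule p.primeCompl (LinearMap.range Φ.mulVecLin)) ∧
        Module.finrank (Localization.AtPrime p)
          (LocalizedModule p.primeCompl (LinearMap.range Φ.mulVecLin)) = n - r :=
  image_flat_of_fitting_ideal_principal_general R n m r Φ a ha hvanish hgen
end

section
/- Let R be a commutative noetherian ring, let Φ be an n × m matrix over R, and let r ≥ 0 be a natural number. Then every (n−r) × (n−r) minor of Φ is nilpotent in R if and only if, for every minimal prime ideal p of R, the cokernel of the κ(p)-linear map κ(p)ᵐ → κ(p)ⁿ induced by Φ (where κ(p) denotes the fraction field of R/p) has dimension at least r + 1 over κ(p). -/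
/-!
Over the residue field `κ(p)` the cokernel of `Φ` has dimension `n - rank`, and the rank of a
matrix over a field is the largest size of a nonvanishing minor. So the cokernel condition at `p`
says exactly that every `(n - r) × (n - r)` minor of `Φ` lies in `p`, and an element lies in every
minimal prime iff it is nilpotent.
-/

open Module Submodule

lemma exists_injective_linearIndependent_comp_of_le_finrank_span {K V ι : Type*} [Field K]
    [AddCommGroup V] [Module K V] [Finite ι] (v : ι → V) {k : ℕ}
    (hk : k ≤ finrank K (span K (Set.range v))) :
    ∃ g : Fin k → ι, Function.Injective g ∧ LinearIndependent K (v ∘ g) := by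
  obtain ⟨κ, a, ha, hspan, hli⟩ := exists_linearIndependent' K v
  have : Finite κ := Finite.of_injective a ha
  have : Fintype κ := Fintype.ofFinite κ
  rw [← hspan, finrank_span_eq_card hli] at hk
  obtain ⟨e⟩ := Function.Embedding.nonempty_of_card_le (α := Fin k) (β := κ) (by simpa using hk)
  exact ⟨a ∘ e, ha.comp e.injective, hli.comp e e.injective⟩

namespace Matrix

variable {K m n : Type*} [Field K] [Fintype m] [Fintype n]

lemma exists_submatrix_det_ne_zero_of_le_rank (A : Matrix m n K) {k : ℕ} (hk : k ≤ A.rank) :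
    ∃ (f : Fin k → m) (g : Fin k → n),
      Function.Injective f ∧ Function.Injective g ∧ (A.submatrix f g).det ≠ 0 := by
  rw [rank_eq_finrank_span_cols] at hk
  obtain ⟨g, hg, hcols⟩ := exists_injective_linearIndependent_comp_of_le_finrank_span A.col hk
  have hrank : (A.submatrix id g).rank = k := by
    rw [← rank_transpose]
    exact hcols.rank_matrix.trans (Fintype.card_fin k)
  rw [rank_eq_finrank_span_row] at hrank
  obtain ⟨f, hf, hrows⟩ :=
    exists_injective_linearIndependent_comp_of_le_finrank_span _ hrank.ge
  have hunit : IsUnit (A.submatrix f g) := linearIndependent_rows_iff_isUnit.mp hrows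
  exact ⟨f, g, hf, hg, ((isUnit_iff_isUnit_det _).mp hunit).ne_zero⟩

lemma le_rank_iff_exists_submatrix_det_ne_zero (A : Matrix m n K) {k : ℕ} :
    k ≤ A.rank ↔ ∃ (f : Fin k → m) (g : Fin k → n),
      Function.Injective f ∧ Function.Injective g ∧ (A.submatrix f g).det ≠ 0 := by
  refine ⟨A.exists_submatrix_det_ne_zero_of_le_rank, ?_⟩
  rintro ⟨f, g, -, -, hdet⟩
  calc k = (A.submatrix f g).rank := by rw [rank_of_det_ne_zero hdet, Fintype.card_fin]
    _ ≤ A.rank := rank_submatrix_le A f g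

lemma finrank_quotient_range_mulVecLin (A : Matrix m n K) :
    finrank K ((m → K) ⧸ LinearMap.range A.mulVecLin) = Fintype.card m - A.rank := by
  have := finrank_quotient_add_finrank (LinearMap.range A.mulVecLin)
  rw [finrank_fintype_fun_eq_card] at this
  exact Nat.eq_sub_of_add_eq this

end Matrix

lemma isNilpotent_iff_forall_mem_minimalPrimes {R : Type*} [CommSemiring R] {x : R} :
    IsNilpotent x ↔ ∀ p ∈ minimalPrimes R, x ∈ p := by
  rw [← mem_nilradical, nilradical, ← Ideal.sInf_minimalPrimes, Submodule.mem_sInf]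
  rfl

lemma le_finrank_coker_map_iff_forall_minor_mem_ker {R K : Type*} [CommRing R] [Field K]
    (φ : R →+* K) {n m : ℕ} (Φ : Matrix (Fin n) (Fin m) R) (r : ℕ) :
    r + 1 ≤ finrank K ((Fin n → K) ⧸ LinearMap.range (Φ.map φ).mulVecLin) ↔
      ∀ (f : Fin (n - r) → Fin n) (g : Fin (n - r) → Fin m),
        Function.Injective f → Function.Injective g → (Φ.submatrix f g).det ∈ RingHom.ker φ := by
  have hrank := (Φ.map φ).rank_le_height
  rw [Matrix.finrank_quotient_range_mulVecLin, Fintype.card_fin,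
    show r + 1 ≤ n - (Φ.map φ).rank ↔ ¬ n - r ≤ (Φ.map φ).rank by omega,
    Matrix.le_rank_iff_exists_submatrix_det_ne_zero]
  push Not
  simp only [RingHom.mem_ker, RingHom.map_det, RingHom.mapMatrix_apply, Matrix.submatrix_map]

theorem minors_nilpotent_iff_generic_corank_general
    (R : Type*) [CommRing R]
    (n m r : ℕ) (Φ : Matrix (Fin n) (Fin m) R) :
    (∀ (f : Fin (n - r) → Fin n) (g : Fin (n - r) → Fin m),
      Function.Injective f → Function.Injective g → IsNilpotent (Φ.submatrix f g).det) ↔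
    (∀ (p : Ideal R) (hp : p ∈ minimalPrimes R),
      haveI : p.IsPrime := hp.1.1
      r + 1 ≤ Module.finrank (FractionRing (R ⧸ p))
        ((Fin n → FractionRing (R ⧸ p)) ⧸ LinearMap.range
          (Φ.map ((algebraMap (R ⧸ p) (FractionRing (R ⧸ p))).comp
            (Ideal.Quotient.mk p))).mulVecLin)) := by
  have hker (p : Ideal R) [p.IsPrime] :
      RingHom.ker ((algebraMap (R ⧸ p) (FractionRing (R ⧸ p))).comp (Ideal.Quotient.mk p)) = p := by
    rw [RingHom.ker_comp_of_injective _ (IsFractionRing.injective _ _), Ideal.mk_ker]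
  simp only [isNilpotent_iff_forall_mem_minimalPrimes]
  constructor
  · intro h p hp
    have : p.IsPrime := hp.1.1
    rw [le_finrank_coker_map_iff_forall_minor_mem_ker, hker]
    exact fun f g hf hg ↦ h f g hf hg p hp
  · intro h f g hf hg p hp
    have : p.IsPrime := hp.1.1
    have hp' := h p hp
    rw [le_finrank_coker_map_iff_forall_minor_mem_ker, hker] at hp'
    exact hp' f g hf hg

/-- Let `R` be a commutative noetherian ring, `Φ` an `n × m` matrix over `R`, and `r ≥ 0`.
Then every `(n-r) × (n-r)` minor of `Φ` is nilpotent if and only if, for every minimal prime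
`p` of `R`, the cokernel of the `κ(p)`-linear map `κ(p)^m → κ(p)^n` induced by `Φ` (where
`κ(p)` is the fraction field of `R ⧸ p`) has dimension at least `r + 1` over `κ(p)`. -/
theorem minors_nilpotent_iff_generic_corank
    (R : Type*) [CommRing R] [IsNoetherianRing R]
    (n m r : ℕ) (Φ : Matrix (Fin n) (Fin m) R) :
    (∀ (f : Fin (n - r) → Fin n) (g : Fin (n - r) → Fin m),
      Function.Injective f → Function.Injective g → IsNilpotent (Φ.submatrix f g).det) ↔
    (∀ (p : Ideal R) (hp : p ∈ minimalPrimes R),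
      haveI : p.IsPrime := hp.1.1
      r + 1 ≤ Module.finrank (FractionRing (R ⧸ p))
        ((Fin n → FractionRing (R ⧸ p)) ⧸ LinearMap.range
          (Φ.map ((algebraMap (R ⧸ p) (FractionRing (R ⧸ p))).comp
            (Ideal.Quotient.mk p))).mulVecLin)) :=
  minors_nilpotent_iff_generic_corank_general R n m r Φ
end

section
/- Let A be a commutative Banach ℚ_p-algebra whose norm is nonarchimedean (ultrametric), and let f ∈ A be an element such that f − 1 is topologically nilpotent, i.e. (f − 1)ⁿ → 0 as n → ∞. Then there exists a unique continuous map χ : ℤ_p → A such that χ(1) = f and χ(x + y) = χ(x)·χ(y) for all x, y ∈ ℤ_p. Moreover, χ(x) is a unit of A for every x ∈ ℤ_p (in particular χ(0) = 1 and f is a unit). -/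
/-!
The character is the Mahler series `χ x = ∑ₖ (x choose k) (f - 1)ᵏ`: its coefficients tend to `0`,
so it converges to a continuous function in the ultrametric Banach space `A`, and by the binomial
theorem it takes the value `fⁿ` at every natural number `n`. Since `ℕ` is dense in `ℤ_p`, a
continuous map `χ` with `χ (x + y) = χ x * χ y` is determined by `χ 1`; this gives both the
multiplicativity of the Mahler series and uniqueness.
-/

open Filter Topology

lemma map_natCast_succ_eq_pow {G M : Type*} [AddMonoidWithOne G] [Monoid M] {χ : G → M}
    (hadd : ∀ x y, χ (x + y) = χ x * χ y) (n : ℕ) :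
    χ ((n + 1 : ℕ) : G) = χ 1 ^ (n + 1) := by
  induction n with
  | zero => simp
  | succ n ih => rw [Nat.cast_succ, hadd, ih, ← pow_succ]

theorem DenseRange.eq_of_map_add_eq_mul_of_apply_one_eq {G M : Type*} [AddGroupWithOne G]
    [TopologicalSpace G] [ContinuousAdd G] [Monoid M] [TopologicalSpace M] [T2Space M]
    (hd : DenseRange ((↑) : ℕ → G))
    {χ ψ : G → M} (hχ : Continuous χ) (hψ : Continuous ψ)
    (hχadd : ∀ x y, χ (x + y) = χ x * χ y) (hψadd : ∀ x y, ψ (x + y) = ψ x * ψ y)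
    (h1 : χ 1 = ψ 1) : χ = ψ := by
  -- `χ 0` is only known to be idempotent, so the maps are compared on `ℕ + 1` rather than `ℕ`.
  have hshift : (fun x ↦ χ (x + 1)) = fun x ↦ ψ (x + 1) :=
    hd.equalizer (by fun_prop) (by fun_prop) <| funext fun n ↦ by
      simp only [Function.comp_apply, ← Nat.cast_succ, map_natCast_succ_eq_pow hχadd,
        map_natCast_succ_eq_pow hψadd, h1]
  funext x
  simpa using congr_fun hshift (x - 1)

namespace PadicInt

theorem exists_continuous_addChar_apply_one_eq_one_add (p : ℕ) [Fact p.Prime] {A : Type*}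
    [NormedRing A] [NormedAlgebra ℚ_[p] A] [IsUltrametricDist A] [CompleteSpace A] {r : A}
    (hr : Tendsto (r ^ ·) atTop (𝓝 0)) :
    ∃ κ : AddChar ℤ_[p] A, Continuous κ ∧ κ 1 = 1 + r := by
  let : Algebra ℤ_[p] A := Algebra.compHom A Coe.ringHom
  have : IsBoundedSMul ℤ_[p] A := .of_norm_smul_le fun c a ↦ by
    rw [← padic_norm_e_of_padicInt]
    exact norm_smul_le (c : ℚ_[p]) a
  exact ⟨addChar_of_value_at_one r hr, continuous_addChar_of_value_at_one hr,
    addChar_of_value_at_one_def hr⟩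

end PadicInt

/-- Let `A` be a commutative Banach `ℚ_p`-algebra with nonarchimedean norm and let `f ∈ A` be
such that `f - 1` is topologically nilpotent.  Then there exists a unique continuous map
`χ : ℤ_p → A` with `χ 1 = f` and `χ (x + y) = χ x * χ y` for all `x, y ∈ ℤ_p`; moreover,
`χ x` is a unit of `A` for every `x ∈ ℤ_p`. -/
theorem exists_unique_continuous_character_of_topNilpotent
    (p : ℕ) [Fact p.Prime]
    (A : Type*) [NormedCommRing A] [NormedAlgebra ℚ_[p] A] [CompleteSpace A]
    (hna : ∀ x y : A, ‖x + y‖ ≤ max ‖x‖ ‖y‖)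
    (f : A)
    (hf : Filter.Tendsto (fun k : ℕ => (f - 1) ^ k) Filter.atTop (nhds 0)) :
    (∃! χ : ℤ_[p] → A, Continuous χ ∧ χ 1 = f ∧
        ∀ x y : ℤ_[p], χ (x + y) = χ x * χ y) ∧
      ∀ χ : ℤ_[p] → A, (Continuous χ ∧ χ 1 = f ∧
          ∀ x y : ℤ_[p], χ (x + y) = χ x * χ y) →
        ∀ x : ℤ_[p], IsUnit (χ x) := by
  have : IsUltrametricDist A := .isUltrametricDist_of_forall_norm_add_le_max_norm hna
  obtain ⟨κ, hκ, hκ1⟩ := PadicInt.exists_continuous_addChar_apply_one_eq_one_add p hf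
  have hκf : κ 1 = f := by rw [hκ1, add_sub_cancel]
  have eq_κ : ∀ χ : ℤ_[p] → A, (Continuous χ ∧ χ 1 = f ∧
      ∀ x y : ℤ_[p], χ (x + y) = χ x * χ y) → χ = κ := fun χ ⟨hχ, hχ1, hχadd⟩ ↦
    PadicInt.denseRange_natCast.eq_of_map_add_eq_mul_of_apply_one_eq hχ hκ hχadd
      κ.map_add_eq_mul (hχ1.trans hκf.symm)
  refine ⟨⟨κ, ⟨hκ, hκf, κ.map_add_eq_mul⟩, eq_κ⟩, fun χ hχ x ↦ ?_⟩
  rw [eq_κ χ hχ]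
  exact κ.val_isUnit x
end
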